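/- Let n ≥ 2 and (n-1)/p < α ≤ n/p for some 1 < p < ∞. Define f : ℝ^{n-1} → ℝ by f(x') = (1+|x'|)^{-α}, and let v be its Poisson extension to the upper half-space. Then v ∉ L^p(ℝ^n_+). In particular, the Poisson operator does not map Ẇ^{1-1/p,p}(ℝ^{n-1}) into L^p(ℝ^n_+). -/

import Mathlib

/-!
On the truncated cone `{(x, t) : t ≥ 1, ‖x‖ ≤ t}` the Poisson kernel `P_t(x - y)` is at least a
multiple of `t^(1-n)` for `‖y‖ ≤ t`, and there `f y ≥ (2t)^(-α)`; integrating over this ball of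
volume `≍ t^(n-1)` gives `v(x, t) ≳ t^(-α)`. The slice of the cone at height `t` also has volume
`≍ t^(n-1)`, so `∫ v^p ≳ ∫_1^∞ t^(n-1-αp) dt ≥ ∫_1^∞ dt / t = ∞`, because `αp ≤ n`.
-/

open MeasureTheory Metric Set Module
open scoped ENNReal

lemma lintegral_Ici_one_ofReal_inv : ∫⁻ t in Ici (1 : ℝ), ENNReal.ofReal t⁻¹ = ∞ := by
  by_contra h
  refine not_integrableOn_Ici_inv (a := 1) ⟨measurable_inv.aestronglyMeasurable, ?_⟩
  rw [hasFiniteIntegral_iff_ofReal]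
  · exact lt_top_iff_ne_top.2 h
  · filter_upwards [ae_restrict_mem measurableSet_Ici] with t ht
    exact inv_nonneg.2 (zero_le_one.trans ht)

noncomputable section

namespace HalfSpace

variable {E : Type*} [NormedAddCommGroup E]

def poissonKernel (c : ℝ) (n : ℕ) (x : E) (t : ℝ) : ℝ :=
  c * t / (‖x‖ ^ 2 + t ^ 2) ^ ((n : ℝ) / 2)

def poissonIntegral [MeasurableSpace E] (μ : Measure E) (c : ℝ) (n : ℕ) (f : E → ℝ) (x : E)
    (t : ℝ) : ℝ :=
  ∫ y, poissonKernel c n (x - y) t * f y ∂μ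

variable (E) in
def upperCone : Set (E × ℝ) := {z | 1 ≤ z.2 ∧ ‖z.1‖ ≤ z.2}

lemma preimage_upperCone {t : ℝ} (ht : 1 ≤ t) :
    (fun x : E => (x, t)) ⁻¹' upperCone E = closedBall 0 t := by
  ext x
  simp [upperCone, ht]

section Kernel

variable {c t : ℝ} {n : ℕ}

lemma poissonKernel_nonneg (hc : 0 ≤ c) (ht : 0 ≤ t) (x : E) : 0 ≤ poissonKernel c n x t := by
  unfold poissonKernel
  positivity

lemma div_le_poissonKernel (hc : 0 ≤ c) (ht : 0 < t) {x : E} (hx : ‖x‖ ≤ 2 * t) :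
    c * t / (5 ^ ((n : ℝ) / 2) * t ^ n) ≤ poissonKernel c n x t := by
  have hsq : ‖x‖ ^ 2 + t ^ 2 ≤ 5 * t ^ 2 := by nlinarith [norm_nonneg x]
  have hpow : (5 * t ^ 2) ^ ((n : ℝ) / 2) = 5 ^ ((n : ℝ) / 2) * t ^ n := by
    rw [Real.mul_rpow (by norm_num) (by positivity), ← Real.rpow_natCast t 2,
      ← Real.rpow_mul ht.le, ← Real.rpow_natCast t n]
    congr 2
    push_cast
    ring
  rw [← hpow]
  exact div_le_div_of_nonneg_left (by positivity) (by positivity)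
    (Real.rpow_le_rpow (by positivity) hsq (by positivity))

lemma integrable_poissonKernel_sub_mul [MeasurableSpace E] [BorelSpace E] {μ : Measure E}
    [μ.IsAddRightInvariant] (hK : Integrable (fun y => poissonKernel c n y t) μ) {f : E → ℝ}
    {B : ℝ} (hf : AEStronglyMeasurable f μ) (hfB : ∀ y, ‖f y‖ ≤ B) (x : E) :
    Integrable (fun y => poissonKernel c n (x - y) t * f y) μ := by
  have hK' : Integrable (fun y => poissonKernel c n (x - y) t) μ := by
    simpa only [poissonKernel, norm_sub_rev x] using hK.comp_sub_right x
  exact hK'.mul_bdd hf (.of_forall hfB)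

end Kernel

variable [MeasurableSpace E] [BorelSpace E]

lemma measurableSet_upperCone : MeasurableSet (upperCone E) :=
  (measurableSet_le measurable_const measurable_snd).inter
    (measurableSet_le measurable_fst.norm measurable_snd)

variable [NormedSpace ℝ E] [FiniteDimensional ℝ E] {μ : Measure E} [μ.IsAddHaarMeasure]

lemma mul_rpow_neg_le_poissonIntegral {c α t : ℝ} {n : ℕ} (hd : finrank ℝ E + 1 = n)
    (hc : 0 ≤ c) (hα : 0 ≤ α) (hK : Integrable (fun y => poissonKernel c n y t) μ) {x : E}
    (ht : 1 ≤ t) (hx : ‖x‖ ≤ t) :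
    μ.real (ball 0 1) * c / 5 ^ ((n : ℝ) / 2) * 2 ^ (-α) * t ^ (-α) ≤
      poissonIntegral μ c n (fun y => (1 + ‖y‖) ^ (-α)) x t := by
  have ht0 : 0 < t := one_pos.trans_le ht
  have hf1 : ∀ y : E, ‖(1 + ‖y‖) ^ (-α)‖ ≤ 1 := fun y => by
    rw [Real.norm_of_nonneg (by positivity)]
    exact Real.rpow_le_one_of_one_le_of_nonpos (by linarith [norm_nonneg y]) (by linarith)
  have hint : Integrable (fun y => poissonKernel c n (x - y) t * (1 + ‖y‖) ^ (-α)) μ :=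
    integrable_poissonKernel_sub_mul hK
      ((measurable_const.add measurable_norm).pow_const _).aestronglyMeasurable hf1 x
  have hlow : ∀ y ∈ closedBall (0 : E) t, c * t / (5 ^ ((n : ℝ) / 2) * t ^ n) * (2 * t) ^ (-α) ≤
      poissonKernel c n (x - y) t * (1 + ‖y‖) ^ (-α) := by
    intro y hy
    rw [mem_closedBall_zero_iff] at hy
    refine mul_le_mul (div_le_poissonKernel hc ht0 ?_) ?_ (by positivity)
      (poissonKernel_nonneg hc ht0.le _)
    · linarith [norm_sub_le x y]
    · exact Real.rpow_le_rpow_of_nonpos (by positivity) (by linarith) (by linarith)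
  calc μ.real (ball 0 1) * c / 5 ^ ((n : ℝ) / 2) * 2 ^ (-α) * t ^ (-α)
      = c * t / (5 ^ ((n : ℝ) / 2) * t ^ n) * (2 * t) ^ (-α) * μ.real (closedBall 0 t) := by
        rw [Measure.addHaar_real_closedBall μ 0 ht0.le, Real.mul_rpow zero_le_two ht0.le, ← hd,
          pow_succ]
        field_simp
    _ ≤ ∫ y in closedBall 0 t, poissonKernel c n (x - y) t * (1 + ‖y‖) ^ (-α) ∂μ :=
        setIntegral_ge_of_const_le_real measurableSet_closedBall measure_closedBall_lt_top.ne
          hlow hint.integrableOn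
    _ ≤ poissonIntegral μ c n (fun y => (1 + ‖y‖) ^ (-α)) x t :=
        setIntegral_le_integral hint (.of_forall fun y =>
          mul_nonneg (poissonKernel_nonneg hc ht0.le _) (by positivity))

lemma setLIntegral_upperCone_rpow_neg {β : ℝ} (hβ : β ≤ finrank ℝ E + 1) :
    ∫⁻ z in upperCone E, ENNReal.ofReal (z.2 ^ (-β)) ∂μ.prod volume = ∞ := by
  have hslice : ∀ t,
      ∫⁻ x, (upperCone E).indicator (fun z => ENNReal.ofReal (z.2 ^ (-β))) (x, t) ∂μ =
        ENNReal.ofReal (t ^ (-β)) * μ ((fun x => (x, t)) ⁻¹' upperCone E) := fun t => by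
    rw [← lintegral_indicator_const (measurable_prodMk_right measurableSet_upperCone)]
    exact lintegral_congr fun x => (indicator_comp_right _).symm
  have hgrowth : ∀ t ∈ Ici (1 : ℝ), μ (ball 0 1) * ENNReal.ofReal t⁻¹ ≤
      ENNReal.ofReal (t ^ (-β)) * μ ((fun x => (x, t)) ⁻¹' upperCone E) := by
    intro t ht
    have ht0 : 0 < t := one_pos.trans_le ht
    have hexp : t⁻¹ ≤ t ^ (-β) * t ^ finrank ℝ E := by
      rw [← Real.rpow_natCast, ← Real.rpow_add ht0, ← Real.rpow_neg_one]
      exact Real.rpow_le_rpow_of_exponent_le ht (by linarith)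
    rw [preimage_upperCone ht, Measure.addHaar_closedBall μ 0 ht0.le, ← mul_assoc,
      ← ENNReal.ofReal_mul (by positivity), mul_comm]
    gcongr
  rw [← lintegral_indicator measurableSet_upperCone,
    lintegral_prod_symm' _ ((measurable_snd.pow_const _).ennreal_ofReal.indicator
      measurableSet_upperCone)]
  simp_rw [hslice]
  refine eq_top_iff.2 (calc
    ∞ = ∫⁻ t in Ici 1, μ (ball 0 1) * ENNReal.ofReal t⁻¹ := by
      rw [lintegral_const_mul _ measurable_inv.ennreal_ofReal, lintegral_Ici_one_ofReal_inv,
        ENNReal.mul_top (measure_ball_pos μ 0 one_pos).ne']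
    _ ≤ ∫⁻ t in Ici 1, ENNReal.ofReal (t ^ (-β)) * μ ((fun x => (x, t)) ⁻¹' upperCone E) :=
      setLIntegral_mono' measurableSet_Ici hgrowth
    _ ≤ _ := setLIntegral_le_lintegral _ _)

lemma not_memLp_rpow_neg_upperCone {p α : ℝ} (hp : 0 < p) (hαp : α * p ≤ finrank ℝ E + 1) :
    ¬ MemLp (fun z : E × ℝ => z.2 ^ (-α)) (ENNReal.ofReal p)
      ((μ.prod volume).restrict (upperCone E)) := by
  intro h
  have hint := h.integrable_norm_rpow (by simpa using hp) ENNReal.ofReal_ne_top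
  rw [ENNReal.toReal_ofReal hp.le] at hint
  refine hint.lintegral_lt_top.ne ?_
  rw [← setLIntegral_upperCone_rpow_neg (μ := μ) hαp]
  refine setLIntegral_congr_fun measurableSet_upperCone fun z hz => ?_
  have hz0 : 0 ≤ z.2 := zero_le_one.trans hz.1
  rw [Real.norm_of_nonneg (Real.rpow_nonneg hz0 _), ← Real.rpow_mul hz0, neg_mul]

lemma not_memLp_of_mul_rpow_neg_le {p α C : ℝ} (hp : 0 < p) (hαp : α * p ≤ finrank ℝ E + 1)
    (hC : 0 < C) {g : E × ℝ → ℝ} (hg : ∀ z ∈ upperCone E, C * z.2 ^ (-α) ≤ g z) :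
    ¬ MemLp g (ENNReal.ofReal p) ((μ.prod volume).restrict (upperCone E)) := fun h =>
  not_memLp_rpow_neg_upperCone hp hαp <|
    h.of_le_mul (c := C⁻¹) (measurable_snd.pow_const _).aestronglyMeasurable <| by
      filter_upwards [ae_restrict_mem measurableSet_upperCone] with z hz
      rw [Real.norm_of_nonneg (Real.rpow_nonneg (zero_le_one.trans hz.1) _), le_inv_mul_iff₀ hC]
      exact (hg z hz).trans (Real.le_norm_self _)

end HalfSpace

end

/-- with `(n-1)/p < α ≤ n/p`, `1 < p < ∞`, the Poisson extension `v` of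
`f(x') = (1+|x'|)^{-α}` fails to belong to `L^p(ℝ^n_+)`; in particular the Poisson
operator does not map `Ẇ^{1-1/p,p}(ℝ^{n-1})` into `L^p(ℝ^n_+)`. -/
theorem stmt_7 (n : ℕ) (hn : 2 ≤ n) (p α : ℝ) (hp : 1 < p)
    (hα1 : ((n : ℝ) - 1) / p < α) (hα2 : α ≤ (n : ℝ) / p)
    (c : ℝ) (hc : 0 < c)
    (hnorm : ∀ t : ℝ, 0 < t →
      (∫ x' : EuclideanSpace ℝ (Fin (n - 1)),
        c * t / ((‖x'‖ ^ 2 + t ^ 2) ^ ((n : ℝ) / 2))) = 1) :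
    ¬ MemLp
        (fun x : EuclideanSpace ℝ (Fin (n - 1)) × ℝ =>
          ∫ y, c * x.2 / ((‖x.1 - y‖ ^ 2 + x.2 ^ 2) ^ ((n : ℝ) / 2)) *
            (1 + ‖y‖) ^ (-α))
        (ENNReal.ofReal p)
        (volume.restrict {y : EuclideanSpace ℝ (Fin (n - 1)) × ℝ | 0 < y.2}) := by
  set E := EuclideanSpace ℝ (Fin (n - 1))
  have hd : finrank ℝ E + 1 = n := by
    rw [finrank_euclideanSpace_fin]
    omega
  have hp0 : 0 < p := by linarith
  have hα : 0 < α := by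
    have : (1 : ℝ) ≤ n := by exact_mod_cast (by omega : 1 ≤ n)
    exact (div_nonneg (by linarith) hp0.le).trans_lt hα1
  have hαp : α * p ≤ finrank ℝ E + 1 := by
    rw [← le_div_iff₀ hp0]
    exact_mod_cast hd ▸ hα2
  -- `hnorm` forces integrability: a non-integrable function has integral `0 ≠ 1`.
  have hK : ∀ t, 0 < t → Integrable (fun y : E => HalfSpace.poissonKernel c n y t) := fun t ht =>
    .of_integral_ne_zero (by unfold HalfSpace.poissonKernel; rw [hnorm t ht]; exact one_ne_zero)
  have hC : 0 < (volume : Measure E).real (ball 0 1) * c / 5 ^ ((n : ℝ) / 2) * 2 ^ (-α) := by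
    have := ENNReal.toReal_pos (measure_ball_pos volume (0 : E) one_pos).ne' measure_ball_lt_top.ne
    positivity
  intro hmem
  have hcone : MemLp (fun z : E × ℝ => HalfSpace.poissonIntegral volume c n
      (fun y => (1 + ‖y‖) ^ (-α)) z.1 z.2) (ENNReal.ofReal p)
      ((volume.prod volume).restrict (HalfSpace.upperCone E)) :=
    hmem.mono_measure (Measure.restrict_mono
      (fun z (hz : z ∈ HalfSpace.upperCone E) => (one_pos.trans_le hz.1 : 0 < z.2)) le_rfl)
  exact HalfSpace.not_memLp_of_mul_rpow_neg_le hp0 hαp hC (fun z hz =>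
    HalfSpace.mul_rpow_neg_le_poissonIntegral hd hc.le hα.le (hK _ (one_pos.trans_le hz.1)) hz.1
      hz.2) hcone
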